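/- arXiv:2502.01470 — 3 statements merged into one kernel-verified Lean document; each statement's English description precedes it below -/
import Mathlib

section
/- Let N ≥ 2 be an integer, r > 0 and κ ∈ ℝ. Define Z_j(t) = r·e^{i κ (N−1) t / r²}·e^{2πi(j−1)/N} for j = 1,…,N and t ∈ ℝ. Then Z_j(t) ≠ Z_k(t) for all j ≠ k and all t, and the functions Z_j satisfy the point-vortex system d/dt Z_j(t) = 2i Σ_{k≠j} κ (Z_j(t) − Z_k(t))/|Z_j(t) − Z_k(t)|² for every j and t. In other words, the regular N-gon with identical circulations κ rotates rigidly with angular speed κ(N−1)/r². -/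
/-! Each vertex is `Z_j(t) = c(t) ζ^j` with `ζ = e^{2πi/N}` and `|c(t)| = r`. Since
`z / |z|² = conj z⁻¹`, the right-hand side equals `2iκ · conj (∑_{k ≠ j} (Z_j - Z_k)⁻¹)`.
Pairing `ζ^m` with `ζ^{-m}` and using `1/(1 - w) + 1/(1 - w⁻¹) = 1` gives
`∑_{m ≠ 0} 1/(1 - ζ^m) = (N - 1)/2`, hence `∑_{k ≠ j} (Z_j - Z_k)⁻¹ = (N - 1)/(2 Z_j)`, and the
right-hand side becomes `iκ(N - 1) Z_j / r²`: the velocity of the rigid rotation at angular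
speed `κ(N - 1)/r²`. -/

open Filter Finset

noncomputable section

/-- The rotating regular `N`-gon configuration of point vortices:
`Z_j(t) = r e^{iκ(N−1)t/r²} e^{2πi(j−1)/N}` (indices `j : Fin N` represent `j+1`). -/
def polygonVortex (N : ℕ) (r κ : ℝ) (j : Fin N) (t : ℝ) : ℂ :=
  (r : ℂ) * Complex.exp (Complex.I * (κ : ℂ) * (((N : ℝ) - 1 : ℝ) : ℂ) * (t : ℂ) / ((r : ℂ) ^ 2))
    * Complex.exp (2 * (Real.pi : ℂ) * Complex.I * ((j : ℕ) : ℂ) / (N : ℂ))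

open Complex ComplexConjugate Real

section RootsOfUnity

variable {K : Type*} [Field K]

theorem one_div_one_sub_add_one_div_one_sub_inv {w : K} (hw₀ : w ≠ 0) (hw₁ : w ≠ 1) :
    1 / (1 - w) + 1 / (1 - w⁻¹) = 1 := by
  have h₁ : 1 - w ≠ 0 := sub_ne_zero.mpr hw₁.symm
  have h₂ : w - 1 ≠ 0 := sub_ne_zero.mpr hw₁
  rw [show 1 - w⁻¹ = (w - 1) / w by field_simp]
  field_simp
  ring

variable {N : ℕ} {ζ : K}

theorem pow_val_add_of_pow_eq_one (hζ : ζ ^ N = 1) (a b : Fin N) :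
    ζ ^ ((a + b : Fin N) : ℕ) = ζ ^ (a : ℕ) * ζ ^ (b : ℕ) := by
  rw [Fin.val_add, ← pow_eq_pow_mod _ hζ, pow_add]

namespace IsPrimitiveRoot

variable [NeZero N] (hζ : IsPrimitiveRoot ζ N)
include hζ

theorem two_mul_sum_one_div_one_sub_pow :
    2 * ∑ m ∈ univ.erase (0 : Fin N), 1 / (1 - ζ ^ (m : ℕ)) = N - 1 := by
  have hζ₀ : ζ ≠ 0 := hζ.ne_zero (NeZero.ne N)
  have hpow_neg (m : Fin N) : ζ ^ ((-m : Fin N) : ℕ) = (ζ ^ (m : ℕ))⁻¹ := by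
    refine eq_inv_of_mul_eq_one_left ?_
    rw [← pow_val_add_of_pow_eq_one hζ.pow_eq_one, neg_add_cancel, Fin.val_zero, pow_zero]
  have hreflect : ∑ m ∈ univ.erase (0 : Fin N), 1 / (1 - ζ ^ (m : ℕ))
      = ∑ m ∈ univ.erase (0 : Fin N), 1 / (1 - (ζ ^ (m : ℕ))⁻¹) := by
    refine sum_nbij' (- ·) (- ·) (by simp) (by simp) (by simp) (by simp) fun m _ ↦ ?_
    rw [hpow_neg, inv_inv]
  have hpair : ∀ m ∈ univ.erase (0 : Fin N),
      1 / (1 - ζ ^ (m : ℕ)) + 1 / (1 - (ζ ^ (m : ℕ))⁻¹) = 1 := fun m hm ↦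
    one_div_one_sub_add_one_div_one_sub_inv (pow_ne_zero _ hζ₀)
      (hζ.pow_ne_one_of_pos_of_lt (Fin.val_ne_zero_iff.mpr (ne_of_mem_erase hm)) m.isLt)
  rw [two_mul]
  nth_rewrite 2 [hreflect]
  rw [← sum_add_distrib, sum_congr rfl hpair]
  simp [card_erase_of_mem, Nat.cast_sub (NeZero.one_le : 1 ≤ N)]

theorem two_mul_sum_pow_div_pow_sub_pow (j : Fin N) :
    2 * ∑ k ∈ univ.erase j, ζ ^ (j : ℕ) / (ζ ^ (j : ℕ) - ζ ^ (k : ℕ)) = N - 1 := by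
  have hζj : ζ ^ (j : ℕ) ≠ 0 := pow_ne_zero _ (hζ.ne_zero (NeZero.ne N))
  rw [← hζ.two_mul_sum_one_div_one_sub_pow]
  congr 1
  refine sum_nbij' (· - j) (· + j) (by simp [sub_eq_zero]) (by simp) (by simp) (by simp)
    fun k _ ↦ ?_
  rw [← sub_add_cancel k j, pow_val_add_of_pow_eq_one hζ.pow_eq_one, add_sub_cancel_right]
  field_simp

end IsPrimitiveRoot
end RootsOfUnity

theorem Complex.conj_inv_eq_div_sq_norm (z : ℂ) : conj z⁻¹ = z / (‖z‖ : ℂ) ^ 2 := by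
  rw [inv_def, map_mul, conj_conj, conj_ofReal, normSq_eq_norm_sq]
  push_cast
  rfl

namespace polygonVortex

variable {N : ℕ} {r κ : ℝ}

theorem eq_mul_pow (j : Fin N) (t : ℝ) :
    polygonVortex N r κ j t
      = r * cexp ((κ * (N - 1) / r ^ 2 * t : ℝ) * I) * cexp (2 * π * I / N) ^ (j : ℕ) := by
  rw [polygonVortex, ← Complex.exp_nat_mul]
  push_cast
  ring_nf

theorem hasDerivAt (j : Fin N) (t : ℝ) :
    HasDerivAt (polygonVortex N r κ j)
      (I * κ * (N - 1) / r ^ 2 * polygonVortex N r κ j t) t := by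
  have hfun : polygonVortex N r κ j
      = fun s : ℝ ↦ r * cexp (I * κ * (N - 1) / r ^ 2 * s) * cexp (2 * π * I * j / N) := by
    funext s
    rw [polygonVortex]
    push_cast
    ring_nf
  rw [hfun]
  exact (((hasDerivAt_id (t : ℂ)).const_mul (I * κ * (N - 1) / r ^ 2)).cexp.comp_ofReal.const_mul
    (r : ℂ)).mul_const (cexp (2 * π * I * j / N)) |>.congr_deriv (by simp only [id, mul_one]; ring)

theorem norm_eq (j : Fin N) (t : ℝ) : ‖polygonVortex N r κ j t‖ = |r| := by
  have hN : N ≠ 0 := j.pos.ne'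
  rw [eq_mul_pow, norm_mul, norm_mul, norm_exp_ofReal_mul_I, norm_pow,
    norm_eq_one_of_pow_eq_one ((isPrimitiveRoot_exp N hN).pow_eq_one) hN]
  simp

theorem injective (hr : r ≠ 0) (t : ℝ) : Function.Injective (polygonVortex N r κ · t) := by
  intro j k hjk
  have hN : N ≠ 0 := j.pos.ne'
  simp only [eq_mul_pow] at hjk
  exact Fin.ext <| (isPrimitiveRoot_exp N hN).pow_inj j.isLt k.isLt <|
    mul_left_cancel₀ (mul_ne_zero (ofReal_ne_zero.mpr hr) (Complex.exp_ne_zero _)) hjk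

theorem two_mul_sum_div_sub (hr : r ≠ 0) (j : Fin N) (t : ℝ) :
    2 * ∑ k ∈ univ.erase j,
        polygonVortex N r κ j t / (polygonVortex N r κ j t - polygonVortex N r κ k t) = N - 1 := by
  have : NeZero N := ⟨j.pos.ne'⟩
  have hc : (r : ℂ) * cexp ((κ * (N - 1) / r ^ 2 * t : ℝ) * I) ≠ 0 :=
    mul_ne_zero (ofReal_ne_zero.mpr hr) (Complex.exp_ne_zero _)
  simp only [eq_mul_pow, ← mul_sub, mul_div_mul_left _ _ hc]
  exact (isPrimitiveRoot_exp N (NeZero.ne N)).two_mul_sum_pow_div_pow_sub_pow j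

theorem two_mul_I_mul_sum_div_sq_norm (hr : r ≠ 0) (j : Fin N) (t : ℝ) :
    2 * I * ∑ k ∈ univ.erase j, κ * (polygonVortex N r κ j t - polygonVortex N r κ k t)
        / (‖polygonVortex N r κ j t - polygonVortex N r κ k t‖ : ℂ) ^ 2
      = I * κ * (N - 1) / r ^ 2 * polygonVortex N r κ j t := by
  set Z := (polygonVortex N r κ · t)
  have hZj : Z j ≠ 0 := by
    rw [← norm_ne_zero_iff, norm_eq]
    exact abs_ne_zero.mpr hr
  have hsum : ∑ k ∈ univ.erase j, (Z j - Z k)⁻¹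
      = (Z j)⁻¹ * ∑ k ∈ univ.erase j, Z j / (Z j - Z k) := by
    rw [mul_sum]
    exact sum_congr rfl fun k _ ↦ by rw [div_eq_mul_inv, inv_mul_cancel_left₀ hZj]
  calc 2 * I * ∑ k ∈ univ.erase j, κ * (Z j - Z k) / (‖Z j - Z k‖ : ℂ) ^ 2
      = I * κ * conj ((Z j)⁻¹ * (2 * ∑ k ∈ univ.erase j, Z j / (Z j - Z k))) := by
        simp only [mul_div_assoc, ← conj_inv_eq_div_sq_norm, ← mul_sum, ← map_sum, hsum, map_mul,
          map_ofNat]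
        ring
    _ = I * κ * (N - 1) / r ^ 2 * Z j := by
        rw [two_mul_sum_div_sub hr, map_mul, conj_inv_eq_div_sq_norm, norm_eq, map_sub, map_natCast,
          map_one, ← ofReal_pow, sq_abs, ofReal_pow]
        ring

end polygonVortex

theorem polygon_point_vortex_solution_general
    (N : ℕ) (r : ℝ) (hr : 0 < r) (κ : ℝ) :
    (∀ (j k : Fin N) (t : ℝ), j ≠ k → polygonVortex N r κ j t ≠ polygonVortex N r κ k t) ∧
    (∀ (j : Fin N) (t : ℝ),
      deriv (polygonVortex N r κ j) t
        = 2 * Complex.I * ∑ k ∈ Finset.univ.erase j,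
            (κ : ℂ) * (polygonVortex N r κ j t - polygonVortex N r κ k t)
              / ((‖polygonVortex N r κ j t - polygonVortex N r κ k t‖ : ℝ) : ℂ) ^ 2) := by
  refine ⟨fun j k t hjk h ↦ hjk (polygonVortex.injective hr.ne' t h), fun j t ↦ ?_⟩
  rw [(polygonVortex.hasDerivAt j t).deriv, polygonVortex.two_mul_I_mul_sum_div_sq_norm hr.ne']

/-- **The rotating polygon solves the point-vortex system**: the vertices of a regular
`N`-gon of radius `r` with identical circulations `κ`, rotating rigidly at angular speed
`κ(N−1)/r²`, remain distinct for all times and solve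
`d/dt Z_j = 2i ∑_{k ≠ j} κ (Z_j − Z_k)/|Z_j − Z_k|²`. -/
theorem polygon_point_vortex_solution
    (N : ℕ) (hN : 2 ≤ N) (r : ℝ) (hr : 0 < r) (κ : ℝ) :
    (∀ (j k : Fin N) (t : ℝ), j ≠ k → polygonVortex N r κ j t ≠ polygonVortex N r κ k t) ∧
    (∀ (j : Fin N) (t : ℝ),
      deriv (polygonVortex N r κ j) t
        = 2 * Complex.I * ∑ k ∈ Finset.univ.erase j,
            (κ : ℂ) * (polygonVortex N r κ j t - polygonVortex N r κ k t)
              / ((‖polygonVortex N r κ j t - polygonVortex N r κ k t‖ : ℝ) : ℂ) ^ 2) :=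
  polygon_point_vortex_solution_general N r hr κ

end
end

section
/- Let h ≠ 0 and let K : ℝ² → ℝ^{2×2} be the matrix field K(x₁,x₂) = (1/(h² + x₁² + x₂²))·[[h² + x₂², −x₁x₂],[−x₁x₂, h² + x₁²]]. Then the operator ∇·(K∇·) is rotationally invariant: for every θ ∈ ℝ and every C² function ψ̃ : ℝ² → ℝ, if ψ(x) := ψ̃(Q_θ x), where Q_θ is the rotation matrix [[cos θ, −sin θ],[sin θ, cos θ]], then ∇·(K∇ψ)(x) = [∇·(K∇ψ̃)](Q_θ x) for all x ∈ ℝ². -/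
open Real

noncomputable section

/-- Points of `ℝ²` as pairs. -/
abbrev R2 : Type := ℝ × ℝ

/-- Partial derivatives on `ℝ²`. -/
def pdx (f : R2 → ℝ) (p : R2) : ℝ := deriv (fun s => f (s, p.2)) p.1
def pdy (f : R2 → ℝ) (p : R2) : ℝ := deriv (fun s => f (p.1, s)) p.2

/-- The operator `∇·(K∇ψ)` with
`K(x₁,x₂) = (1/(h²+x₁²+x₂²))·[[h²+x₂², −x₁x₂],[−x₁x₂, h²+x₁²]]`. -/
def Kdiv (h : ℝ) (ψ : R2 → ℝ) (p : R2) : ℝ :=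
  pdx (fun q => ((h ^ 2 + q.2 ^ 2) * pdx ψ q - q.1 * q.2 * pdy ψ q)
        / (h ^ 2 + q.1 ^ 2 + q.2 ^ 2)) p
  + pdy (fun q => (-(q.1 * q.2) * pdx ψ q + (h ^ 2 + q.1 ^ 2) * pdy ψ q)
        / (h ^ 2 + q.1 ^ 2 + q.2 ^ 2)) p

/-- Rotation of `ℝ²` by angle `θ`. -/
def rot (θ : ℝ) (p : R2) : R2 :=
  (Real.cos θ * p.1 - Real.sin θ * p.2, Real.sin θ * p.1 + Real.cos θ * p.2)

/-!
Write `Q = rot θ`, so that `Qᵀ = rot (-θ)`. Since `K(x) = I - x xᵀ / (h² + |x|²)`, the field `K`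
is rotation-equivariant: `K(x) Qᵀ = Qᵀ K(Q x)`. By the chain rule `∇(ψ̃ ∘ Q) = Qᵀ (∇ψ̃ ∘ Q)`, so
the flux `K ∇(ψ̃ ∘ Q)` equals `Qᵀ ((K ∇ψ̃) ∘ Q)`. Finally the divergence of a field of the form
`x ↦ Qᵀ F(Q x)` is `(div F) ∘ Q`, because the Jacobian of that field is `Qᵀ (DF ∘ Q) Q` and the
trace is invariant under conjugation.
-/

lemma fderiv_apply_eq_pdx_pdy {f : R2 → ℝ} {p : R2} (hf : DifferentiableAt ℝ f p) (a b : ℝ) :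
    fderiv ℝ f p (a, b) = a * pdx f p + b * pdy f p := by
  have hx : HasDerivAt (fun s : ℝ => ((s, p.2) : R2)) (1, 0) p.1 :=
    (hasDerivAt_id p.1).prodMk (hasDerivAt_const p.1 p.2)
  have hy : HasDerivAt (fun s : ℝ => ((p.1, s) : R2)) (0, 1) p.2 :=
    (hasDerivAt_const p.2 p.1).prodMk (hasDerivAt_id p.2)
  have hpdx : pdx f p = fderiv ℝ f p (1, 0) := (hf.hasFDerivAt.comp_hasDerivAt p.1 hx).deriv
  have hpdy : pdy f p = fderiv ℝ f p (0, 1) := (hf.hasFDerivAt.comp_hasDerivAt p.2 hy).deriv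
  have hab : ((a, b) : R2) = a • ((1 : ℝ), (0 : ℝ)) + b • ((0 : ℝ), (1 : ℝ)) := by simp
  rw [hab, map_add, map_smul, map_smul, hpdx, hpdy, smul_eq_mul, smul_eq_mul]

lemma contDiff_pdx {n : WithTop ℕ∞} {ψ : R2 → ℝ} (hψ : ContDiff ℝ (n + 1) ψ) :
    ContDiff ℝ n (pdx ψ) := by
  have hdiff : Differentiable ℝ ψ := hψ.differentiable (by simp)
  have hpdx : pdx ψ = fun q => fderiv ℝ ψ q (1, 0) := by
    funext q; simp [fderiv_apply_eq_pdx_pdy (hdiff q)]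
  rw [hpdx]
  exact (hψ.fderiv_right le_rfl).clm_apply contDiff_const

lemma contDiff_pdy {n : WithTop ℕ∞} {ψ : R2 → ℝ} (hψ : ContDiff ℝ (n + 1) ψ) :
    ContDiff ℝ n (pdy ψ) := by
  have hdiff : Differentiable ℝ ψ := hψ.differentiable (by simp)
  have hpdy : pdy ψ = fun q => fderiv ℝ ψ q (0, 1) := by
    funext q; simp [fderiv_apply_eq_pdx_pdy (hdiff q)]
  rw [hpdy]
  exact (hψ.fderiv_right le_rfl).clm_apply contDiff_const

def grad (ψ : R2 → ℝ) (p : R2) : R2 := (pdx ψ p, pdy ψ p)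

def divergence (F : R2 → R2) (p : R2) : ℝ := pdx (fun q => (F q).1) p + pdy (fun q => (F q).2) p

/-- The matrix `K(q)` applied to the vector `v`. -/
def Kapply (h : ℝ) (q v : R2) : R2 :=
  (((h ^ 2 + q.2 ^ 2) * v.1 - q.1 * q.2 * v.2) / (h ^ 2 + q.1 ^ 2 + q.2 ^ 2),
    (-(q.1 * q.2) * v.1 + (h ^ 2 + q.1 ^ 2) * v.2) / (h ^ 2 + q.1 ^ 2 + q.2 ^ 2))

lemma Kdiv_eq_divergence (h : ℝ) (ψ : R2 → ℝ) :
    Kdiv h ψ = divergence (fun q => Kapply h q (grad ψ q)) := rfl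

lemma differentiable_Kapply {h : ℝ} (hh : h ≠ 0) {G : R2 → R2} (hG : Differentiable ℝ G) :
    Differentiable ℝ (fun q => Kapply h q (G q)) := by
  have hD : ∀ q : R2, h ^ 2 + q.1 ^ 2 + q.2 ^ 2 ≠ 0 := fun q => by positivity
  simp only [Kapply, div_eq_mul_inv]
  fun_prop (disch := assumption)

section Rotation

variable (θ : ℝ)

lemma rot_neg_apply (v : R2) :
    rot (-θ) v = (Real.cos θ * v.1 + Real.sin θ * v.2, -Real.sin θ * v.1 + Real.cos θ * v.2) := by
  simp [rot, Real.cos_neg, Real.sin_neg]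

lemma hasDerivAt_comp_rot_fst {f : R2 → ℝ} {p : R2} (hf : DifferentiableAt ℝ f (rot θ p)) :
    HasDerivAt (fun s => f (rot θ (s, p.2)))
      (Real.cos θ * pdx f (rot θ p) + Real.sin θ * pdy f (rot θ p)) p.1 := by
  have hrot : HasDerivAt (fun s : ℝ => rot θ (s, p.2)) (Real.cos θ, Real.sin θ) p.1 := by
    refine HasDerivAt.prodMk ?_ ?_
    · simpa using ((hasDerivAt_id p.1).const_mul (Real.cos θ)).sub_const (Real.sin θ * p.2)
    · simpa using ((hasDerivAt_id p.1).const_mul (Real.sin θ)).add_const (Real.cos θ * p.2)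
  rw [← fderiv_apply_eq_pdx_pdy hf]
  exact hf.hasFDerivAt.comp_hasDerivAt p.1 hrot

lemma hasDerivAt_comp_rot_snd {f : R2 → ℝ} {p : R2} (hf : DifferentiableAt ℝ f (rot θ p)) :
    HasDerivAt (fun s => f (rot θ (p.1, s)))
      (-Real.sin θ * pdx f (rot θ p) + Real.cos θ * pdy f (rot θ p)) p.2 := by
  have hrot : HasDerivAt (fun s : ℝ => rot θ (p.1, s)) (-Real.sin θ, Real.cos θ) p.2 := by
    refine HasDerivAt.prodMk ?_ ?_
    · simpa using ((hasDerivAt_id p.2).const_mul (Real.sin θ)).const_sub (Real.cos θ * p.1)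
    · simpa using ((hasDerivAt_id p.2).const_mul (Real.cos θ)).const_add (Real.sin θ * p.1)
  rw [← fderiv_apply_eq_pdx_pdy hf]
  exact hf.hasFDerivAt.comp_hasDerivAt p.2 hrot

lemma grad_comp_rot {ψ : R2 → ℝ} {p : R2} (hψ : DifferentiableAt ℝ ψ (rot θ p)) :
    grad (fun y => ψ (rot θ y)) p = rot (-θ) (grad ψ (rot θ p)) := by
  rw [rot_neg_apply]
  exact Prod.ext (hasDerivAt_comp_rot_fst θ hψ).deriv (hasDerivAt_comp_rot_snd θ hψ).deriv

lemma divergence_rot_conj {F : R2 → R2} {p : R2} (hF : DifferentiableAt ℝ F (rot θ p)) :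
    divergence (fun q => rot (-θ) (F (rot θ q))) p = divergence F (rot θ p) := by
  have hF₁ := hasDerivAt_comp_rot_fst θ hF.fst
  have hF₂ := hasDerivAt_comp_rot_fst θ hF.snd
  have hG₁ := hasDerivAt_comp_rot_snd θ hF.fst
  have hG₂ := hasDerivAt_comp_rot_snd θ hF.snd
  have hfst : pdx (fun q => (rot (-θ) (F (rot θ q))).1) p
      = Real.cos θ * (Real.cos θ * pdx (fun q => (F q).1) (rot θ p)
          + Real.sin θ * pdy (fun q => (F q).1) (rot θ p))
        + Real.sin θ * (Real.cos θ * pdx (fun q => (F q).2) (rot θ p)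
          + Real.sin θ * pdy (fun q => (F q).2) (rot θ p)) := by
    simp only [rot_neg_apply]
    exact ((hF₁.const_mul _).add (hF₂.const_mul _)).deriv
  have hsnd : pdy (fun q => (rot (-θ) (F (rot θ q))).2) p
      = -Real.sin θ * (-Real.sin θ * pdx (fun q => (F q).1) (rot θ p)
          + Real.cos θ * pdy (fun q => (F q).1) (rot θ p))
        + Real.cos θ * (-Real.sin θ * pdx (fun q => (F q).2) (rot θ p)
          + Real.cos θ * pdy (fun q => (F q).2) (rot θ p)) := by
    simp only [rot_neg_apply]
    exact ((hG₁.const_mul _).add (hG₂.const_mul _)).deriv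
  rw [divergence, divergence, hfst, hsnd]
  linear_combination (pdx (fun q => (F q).1) (rot θ p) + pdy (fun q => (F q).2) (rot θ p))
    * Real.cos_sq_add_sin_sq θ

lemma Kapply_rot_neg (h : ℝ) (q v : R2) :
    Kapply h q (rot (-θ) v) = rot (-θ) (Kapply h (rot θ q) v) := by
  have hcs := Real.cos_sq_add_sin_sq θ
  have hnorm : h ^ 2 + (rot θ q).1 ^ 2 + (rot θ q).2 ^ 2 = h ^ 2 + q.1 ^ 2 + q.2 ^ 2 := by
    simp only [rot]; linear_combination (q.1 ^ 2 + q.2 ^ 2) * hcs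
  simp only [Kapply, rot_neg_apply, hnorm, Prod.mk.injEq]
  simp only [rot]
  -- The two sides differ by `(1 - cos² θ - sin² θ) • w • (q₂, -q₁) / (h² + |q|²)`.
  set w := v.1 * (Real.sin θ * q.1 + Real.cos θ * q.2) - v.2 * (Real.cos θ * q.1 - Real.sin θ * q.2)
  constructor
  · linear_combination (-(q.2 * w) / (h ^ 2 + q.1 ^ 2 + q.2 ^ 2)) * hcs
  · linear_combination (q.1 * w / (h ^ 2 + q.1 ^ 2 + q.2 ^ 2)) * hcs

end Rotation

/-- **Rotational invariance of `∇·(K∇·)`**: if `ψ(x) = ψ̃(Q_θ x)` then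
`∇·(K∇ψ)(x) = [∇·(K∇ψ̃)](Q_θ x)` for every `x`. -/
theorem Kdiv_rotation_invariant
    (h : ℝ) (hh : h ≠ 0) (θ : ℝ) (ψt : R2 → ℝ) (hψ : ContDiff ℝ 2 ψt) :
    ∀ x : R2, Kdiv h (fun y => ψt (rot θ y)) x = Kdiv h ψt (rot θ x) := by
  intro x
  have hψ' : ContDiff ℝ (1 + 1) ψt := by norm_num [hψ]
  have hflux : Differentiable ℝ (fun q => Kapply h q (grad ψt q)) :=
    differentiable_Kapply hh ((contDiff_pdx hψ').differentiable one_ne_zero |>.prodMk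
      ((contDiff_pdy hψ').differentiable one_ne_zero))
  calc Kdiv h (fun y => ψt (rot θ y)) x
      = divergence (fun q => Kapply h q (rot (-θ) (grad ψt (rot θ q)))) x := by
        rw [Kdiv_eq_divergence]
        simp_rw [grad_comp_rot θ (hψ.differentiable (by norm_num) _)]
    _ = divergence (fun q => rot (-θ) (Kapply h (rot θ q) (grad ψt (rot θ q)))) x := by
        simp_rw [Kapply_rot_neg]
    _ = Kdiv h ψt (rot θ x) := divergence_rot_conj θ (hflux _)

end
end

section
/- For every δ > 0 there exists C > 0 such that for every a ∈ (0, δ] there exists a function h₁ : [0,∞) → ℝ, with h₁ of class C² on (0,∞), such that the function H(z) = h₁(|z|)·cos(3θ) (where z = |z|e^{iθ} ∈ ℝ² ≅ ℂ) satisfies Δ H(z) + Re(z³)/(a² + |z|²)² = 0 for all z with 0 < |z| ≤ δ, and |h₁(s)| ≤ C·s for all 0 ≤ s ≤ δ. -/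
open Real

noncomputable section

/-- Laplacian on `ℝ²`. -/
def lap2 (f : R2 → ℝ) (p : R2) : ℝ := pdx (pdx f) p + pdy (pdy f) p

/-- The point `z ∈ ℝ²` viewed as a complex number. -/
def toC (z : R2) : ℂ := (z.1 : ℂ) + (z.2 : ℂ) * Complex.I

/-!
Write `q = |z|²` and `b = a²`. Since `Re(z³) = x³ - 3xy²` is harmonic and homogeneous of
degree 3, `Δ (G(q) Re(z³)) = (4 q G'' + 16 G') Re(z³)`, so `H = G(q) Re(z³) = h₁(|z|) cos 3θ`
with `h₁(s) = s³ G(s²)` solves the equation as soon as `4 q G'' + 16 G' = -1/(b+q)²`.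
This ODE is solved by `G = N(q)/(4q³)`, where
`N(q) = ∫₀^q t²/(b+t) dt = q²/2 - b q + b² log(1 + q/b)`. The log bounds
`2x/(x+2) ≤ log(1+x) ≤ x` give `0 ≤ N(q) ≤ q²/2`, hence `0 ≤ h₁(s) ≤ s/8` uniformly in `a`.
-/

open Filter Topology

theorem Complex.re_pow_eq_norm_pow_mul_cos (z : ℂ) (n : ℕ) :
    (z ^ n).re = ‖z‖ ^ n * Real.cos (n * Complex.arg z) := by
  conv_lhs => rw [← Complex.norm_mul_exp_arg_mul_I z]
  rw [mul_pow, ← Complex.ofReal_pow, ← Complex.exp_nat_mul, ← mul_assoc,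
    ← Complex.ofReal_natCast, ← Complex.ofReal_mul, Complex.re_ofReal_mul,
    Complex.exp_ofReal_mul_I_re]

theorem norm_toC_sq (w : R2) : ‖toC w‖ ^ 2 = w.1 ^ 2 + w.2 ^ 2 := by
  simp [toC, Complex.sq_norm, Complex.normSq_apply]
  ring

theorem re_toC_pow_three (w : R2) : ((toC w) ^ 3).re = w.1 ^ 3 - 3 * w.1 * w.2 ^ 2 := by
  simp [toC, pow_succ]
  ring

theorem deriv_deriv_eq_of_hasDerivAt {F F' : ℝ → ℝ} {x F'' : ℝ}
    (hF : ∀ᶠ s in 𝓝 x, HasDerivAt F (F' s) s) (hF' : HasDerivAt F' F'' x) :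
    deriv (deriv F) x = F'' := by
  rw [EventuallyEq.deriv_eq (hF.mono fun s hs => hs.deriv)]
  exact hF'.deriv

section RadialTimesCubic

variable {g g' g'' : ℝ → ℝ} (hg : ∀ q, 0 < q → HasDerivAt g (g' q) q)
  (hg' : ∀ q, 0 < q → HasDerivAt g' (g'' q) q)

include hg in
theorem hasDerivAt_comp_sq_add {s c : ℝ} (hs : 0 < s ^ 2 + c) :
    HasDerivAt (fun s => g (s ^ 2 + c)) (2 * s * g' (s ^ 2 + c)) s :=
  ((hg _ hs).comp s ((hasDerivAt_pow 2 s).add_const c)).congr_deriv (by simp; ring)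

include hg in
theorem hasDerivAt_comp_add_sq {s c : ℝ} (hs : 0 < c + s ^ 2) :
    HasDerivAt (fun s => g (c + s ^ 2)) (2 * s * g' (c + s ^ 2)) s := by
  simpa only [add_comm c] using hasDerivAt_comp_sq_add hg (c := c) (by linarith)

include hg hg'

theorem deriv_deriv_radial_mul_cubic_fst {x y : ℝ} (hxy : 0 < x ^ 2 + y ^ 2) :
    deriv (deriv fun s => g (s ^ 2 + y ^ 2) * (s ^ 3 - 3 * s * y ^ 2)) x
      = 4 * x ^ 2 * g'' (x ^ 2 + y ^ 2) * (x ^ 3 - 3 * x * y ^ 2)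
        + 2 * g' (x ^ 2 + y ^ 2) * (x ^ 3 - 3 * x * y ^ 2)
        + 4 * x * g' (x ^ 2 + y ^ 2) * (3 * x ^ 2 - 3 * y ^ 2)
        + 6 * x * g (x ^ 2 + y ^ 2) := by
  have hcubic : ∀ s, HasDerivAt (fun s => s ^ 3 - 3 * s * y ^ 2) (3 * s ^ 2 - 3 * y ^ 2) s :=
    fun s => ((hasDerivAt_pow 3 s).fun_sub
      (((hasDerivAt_id' s).const_mul 3).mul_const (y ^ 2))).congr_deriv (by simp)
  have hpos : ∀ᶠ s in 𝓝 x, 0 < s ^ 2 + y ^ 2 :=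
    continuousAt_const.eventually_lt (by fun_prop) hxy
  refine deriv_deriv_eq_of_hasDerivAt (F' := fun s =>
      2 * s * g' (s ^ 2 + y ^ 2) * (s ^ 3 - 3 * s * y ^ 2)
        + g (s ^ 2 + y ^ 2) * (3 * s ^ 2 - 3 * y ^ 2)) ?_ ?_
  · filter_upwards [hpos] with s hs
    exact ((hasDerivAt_comp_sq_add hg hs).fun_mul (hcubic s)).congr_deriv (by ring)
  · have h2 := (((hasDerivAt_id' x).const_mul 2).fun_mul
      (hasDerivAt_comp_sq_add hg' hxy)).fun_mul (hcubic x)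
    have h3 := (hasDerivAt_comp_sq_add hg hxy).fun_mul
      (((hasDerivAt_pow 2 x).const_mul 3).sub_const (3 * y ^ 2))
    exact (h2.fun_add h3).congr_deriv (by simp; ring)

theorem deriv_deriv_radial_mul_cubic_snd {x y : ℝ} (hxy : 0 < x ^ 2 + y ^ 2) :
    deriv (deriv fun t => g (x ^ 2 + t ^ 2) * (x ^ 3 - 3 * x * t ^ 2)) y
      = 4 * y ^ 2 * g'' (x ^ 2 + y ^ 2) * (x ^ 3 - 3 * x * y ^ 2)
        + 2 * g' (x ^ 2 + y ^ 2) * (x ^ 3 - 3 * x * y ^ 2)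
        - 24 * x * y ^ 2 * g' (x ^ 2 + y ^ 2)
        - 6 * x * g (x ^ 2 + y ^ 2) := by
  have hcubic : ∀ t, HasDerivAt (fun t => x ^ 3 - 3 * x * t ^ 2) (-(6 * x * t)) t :=
    fun t => (((hasDerivAt_pow 2 t).const_mul (3 * x)).const_sub (x ^ 3)).congr_deriv (by ring)
  have hpos : ∀ᶠ t in 𝓝 y, 0 < x ^ 2 + t ^ 2 :=
    continuousAt_const.eventually_lt (by fun_prop) hxy
  refine deriv_deriv_eq_of_hasDerivAt (F' := fun t =>
      2 * t * g' (x ^ 2 + t ^ 2) * (x ^ 3 - 3 * x * t ^ 2) - 6 * x * t * g (x ^ 2 + t ^ 2)) ?_ ?_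
  · filter_upwards [hpos] with t ht
    exact ((hasDerivAt_comp_add_sq hg ht).fun_mul (hcubic t)).congr_deriv (by ring)
  · have h2 := (((hasDerivAt_id' y).const_mul 2).fun_mul
      (hasDerivAt_comp_add_sq hg' hxy)).fun_mul (hcubic y)
    have h3 := ((hasDerivAt_id' y).const_mul (6 * x)).fun_mul (hasDerivAt_comp_add_sq hg hxy)
    exact (h2.fun_sub h3).congr_deriv (by simp; ring)

theorem lap2_radial_mul_cubic {p : R2} (hp : 0 < p.1 ^ 2 + p.2 ^ 2) :
    lap2 (fun w => g (w.1 ^ 2 + w.2 ^ 2) * (w.1 ^ 3 - 3 * w.1 * w.2 ^ 2)) p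
      = (4 * (p.1 ^ 2 + p.2 ^ 2) * g'' (p.1 ^ 2 + p.2 ^ 2) + 16 * g' (p.1 ^ 2 + p.2 ^ 2))
        * (p.1 ^ 3 - 3 * p.1 * p.2 ^ 2) := by
  obtain ⟨x, y⟩ := p
  change deriv (deriv fun s => g (s ^ 2 + y ^ 2) * (s ^ 3 - 3 * s * y ^ 2)) x
    + deriv (deriv fun t => g (x ^ 2 + t ^ 2) * (x ^ 3 - 3 * x * t ^ 2)) y = _
  rw [deriv_deriv_radial_mul_cubic_fst hg hg' hp, deriv_deriv_radial_mul_cubic_snd hg hg' hp]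
  ring

end RadialTimesCubic

section ModeThreeProfile

def modeThreePrimitive (b q : ℝ) : ℝ := q ^ 2 / 2 - b * q + b ^ 2 * log (1 + q / b)

def modeThreeProfile (b q : ℝ) : ℝ := modeThreePrimitive b q / (4 * q ^ 3)

-- `(q³ G)' = q² / (4 (b + q))` gives `G'`; differentiating `q G' + 3 G` once more gives `G''`.
def modeThreeProfileDeriv (b q : ℝ) : ℝ := (1 / (4 * (b + q)) - 3 * modeThreeProfile b q) / q

def modeThreeProfileDeriv2 (b q : ℝ) : ℝ :=
  (-1 / (4 * (b + q) ^ 2) - 4 * modeThreeProfileDeriv b q) / q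

def modeThreeRadial (b s : ℝ) : ℝ := s ^ 3 * modeThreeProfile b (s ^ 2)

variable {b q : ℝ}

theorem hasDerivAt_modeThreePrimitive (hb : 0 < b) (hbq : 0 < b + q) :
    HasDerivAt (modeThreePrimitive b) (q ^ 2 / (b + q)) q := by
  have hpos : 0 < 1 + q / b := by rw [one_add_div hb.ne']; exact div_pos hbq hb
  have hlog := (((hasDerivAt_id' q).div_const b).const_add 1).log hpos.ne'
  have := (((hasDerivAt_pow 2 q).div_const 2).fun_sub ((hasDerivAt_id' q).const_mul b)).fun_add
    (hlog.const_mul (b ^ 2))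
  exact this.congr_deriv (by field_simp; ring)

theorem hasDerivAt_modeThreeProfile (hb : 0 < b) (hq : 0 < q) :
    HasDerivAt (modeThreeProfile b) (modeThreeProfileDeriv b q) q := by
  have := (hasDerivAt_modeThreePrimitive hb (by positivity)).div
    ((hasDerivAt_pow 3 q).const_mul 4) (by positivity)
  refine this.congr_deriv ?_
  unfold modeThreeProfileDeriv modeThreeProfile
  field_simp
  ring

theorem hasDerivAt_modeThreeProfileDeriv (hb : 0 < b) (hq : 0 < q) :
    HasDerivAt (modeThreeProfileDeriv b) (modeThreeProfileDeriv2 b q) q := by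
  have hinv := (hasDerivAt_const q (1 : ℝ)).fun_div
    (((hasDerivAt_id' q).const_add b).const_mul 4) (by positivity)
  have := (hinv.fun_sub ((hasDerivAt_modeThreeProfile hb hq).const_mul 3)).fun_div
    (hasDerivAt_id' q) hq.ne'
  refine this.congr_deriv ?_
  unfold modeThreeProfileDeriv2 modeThreeProfileDeriv
  field_simp
  ring

theorem modeThreeProfile_ode (hb : 0 < b) (hq : 0 < q) :
    4 * q * modeThreeProfileDeriv2 b q + 16 * modeThreeProfileDeriv b q = -1 / (b + q) ^ 2 := by
  unfold modeThreeProfileDeriv2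
  field_simp
  ring

theorem modeThreePrimitive_nonneg (hb : 0 < b) (hq : 0 ≤ q) : 0 ≤ modeThreePrimitive b q := by
  have hlog : 2 * q / (q + 2 * b) ≤ log (1 + q / b) := by
    convert le_log_one_add_of_nonneg (div_nonneg hq hb.le) using 1
    field_simp
  have hsum : q ^ 2 / 2 - b * q + b ^ 2 * (2 * q / (q + 2 * b)) = q ^ 3 / (2 * (q + 2 * b)) := by
    field_simp
    ring
  calc 0 ≤ q ^ 3 / (2 * (q + 2 * b)) := by positivity
    _ ≤ modeThreePrimitive b q := by
      rw [← hsum, modeThreePrimitive]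
      gcongr

theorem modeThreePrimitive_le (hb : 0 < b) (hq : 0 ≤ q) :
    modeThreePrimitive b q ≤ q ^ 2 / 2 := by
  have hlog : log (1 + q / b) ≤ q / b := by
    linarith [log_le_sub_one_of_pos (show 0 < 1 + q / b by positivity)]
  calc modeThreePrimitive b q ≤ q ^ 2 / 2 - b * q + b ^ 2 * (q / b) := by
        rw [modeThreePrimitive]
        gcongr
    _ = q ^ 2 / 2 := by field_simp; ring

theorem contDiffOn_modeThreeRadial (hb : 0 < b) :
    ContDiffOn ℝ 2 (modeThreeRadial b) (Set.Ioi 0) := by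
  unfold modeThreeRadial modeThreeProfile modeThreePrimitive
  fun_prop (disch := intro x hx; rw [Set.mem_Ioi] at hx; positivity)

theorem abs_modeThreeRadial_le (hb : 0 < b) {s : ℝ} (hs : 0 ≤ s) :
    |modeThreeRadial b s| ≤ s / 8 := by
  rcases hs.eq_or_lt with rfl | hs
  · simp [modeThreeRadial]
  have hR : modeThreeRadial b s = modeThreePrimitive b (s ^ 2) / (4 * s ^ 3) := by
    unfold modeThreeRadial modeThreeProfile
    field_simp
  rw [hR, abs_of_nonneg (div_nonneg (modeThreePrimitive_nonneg hb (sq_nonneg s)) (by positivity)),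
    div_le_iff₀ (by positivity)]
  linarith [modeThreePrimitive_le hb (sq_nonneg s)]

theorem modeThreeRadial_mul_cos_arg_toC (b : ℝ) :
    (fun w => modeThreeRadial b ‖toC w‖ * Real.cos (3 * Complex.arg (toC w)))
      = fun w => modeThreeProfile b (w.1 ^ 2 + w.2 ^ 2) * (w.1 ^ 3 - 3 * w.1 * w.2 ^ 2) := by
  funext w
  rw [← norm_toC_sq, ← re_toC_pow_three, Complex.re_pow_eq_norm_pow_mul_cos, modeThreeRadial]
  push_cast
  ring

end ModeThreeProfile

theorem mode_three_correction_exists_general (δ : ℝ) :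
    ∃ C : ℝ, 0 < C ∧
      ∀ a : ℝ, a ∈ Set.Ioc (0 : ℝ) δ →
        ∃ h₁ : ℝ → ℝ, ContDiffOn ℝ 2 h₁ (Set.Ioi (0 : ℝ)) ∧
          (∀ z : R2, 0 < ‖toC z‖ → ‖toC z‖ ≤ δ →
            lap2 (fun w => h₁ (‖toC w‖) * Real.cos (3 * Complex.arg (toC w))) z
              + ((toC z) ^ 3).re / (a ^ 2 + (‖toC z‖) ^ 2) ^ 2 = 0) ∧
          (∀ s : ℝ, 0 ≤ s → s ≤ δ → |h₁ s| ≤ C * s) := by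
  refine ⟨1 / 8, by norm_num, fun a ha => ?_⟩
  have hb : 0 < a ^ 2 := pow_pos ha.1 2
  refine ⟨modeThreeRadial (a ^ 2), contDiffOn_modeThreeRadial hb, fun z hz _ => ?_,
    fun s hs _ => (abs_modeThreeRadial_le hb hs).trans_eq (by ring)⟩
  have hq : 0 < z.1 ^ 2 + z.2 ^ 2 := norm_toC_sq z ▸ pow_pos hz 2
  rw [modeThreeRadial_mul_cos_arg_toC, lap2_radial_mul_cubic
      (fun q hq => hasDerivAt_modeThreeProfile hb hq)
      (fun q hq => hasDerivAt_modeThreeProfileDeriv hb hq) hq,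
    modeThreeProfile_ode hb hq, re_toC_pow_three, norm_toC_sq]
  field_simp
  ring

/-- **The mode-3 correction `H₁`** (cf. Proposition 2.2): for every `δ > 0` there is `C > 0`
so that for every regularization scale `a ∈ (0, δ]` there exists `h₁`, of class `C²` on
`(0,∞)`, such that `H(z) = h₁(|z|) cos 3θ` solves `ΔH + Re(z³)/(a²+|z|²)² = 0` on
`0 < |z| ≤ δ` and `|h₁(s)| ≤ C s` on `[0, δ]`. -/
theorem mode_three_correction_exists (δ : ℝ) (hδ : 0 < δ) :
    ∃ C : ℝ, 0 < C ∧
      ∀ a : ℝ, a ∈ Set.Ioc (0 : ℝ) δ →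
        ∃ h₁ : ℝ → ℝ, ContDiffOn ℝ 2 h₁ (Set.Ioi (0 : ℝ)) ∧
          (∀ z : R2, 0 < ‖toC z‖ → ‖toC z‖ ≤ δ →
            lap2 (fun w => h₁ (‖toC w‖) * Real.cos (3 * Complex.arg (toC w))) z
              + ((toC z) ^ 3).re / (a ^ 2 + (‖toC z‖) ^ 2) ^ 2 = 0) ∧
          (∀ s : ℝ, 0 ≤ s → s ≤ δ → |h₁ s| ≤ C * s) :=
  mode_three_correction_exists_general δ

end
end
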